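/- arXiv:1110.4882 — 2 statements merged into one kernel-verified Lean document; each statement's English description precedes it below -/
import Mathlib

section
/- Let F ⊆ E be linear acyclic and let x, y : E → ℝ both be F-tight. Then ||x − y||_∞ ≤ ||ρ_x − ρ_y||_1, i.e., max_{a∈E} |x_a − y_a| ≤ Σ_{i∈V} |ρ_x(i) − ρ_y(i)|. -/
open Finset

/-- Net inflow `ρ_x(i)` of a vector `x : E → ℝ` at a node `i` of a finite directed
multigraph given by `tail, head : E → V`. -/
def netInflow {V E : Type*} [Fintype E] [DecidableEq V]
    (tail head : E → V) (x : E → ℝ) (i : V) : ℝ :=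
  (∑ a ∈ Finset.univ.filter (fun a => head a = i), x a)
    - (∑ a ∈ Finset.univ.filter (fun a => tail a = i), x a)

/-!
Put `d = x - y` and `π = πx - πy`. Linear arcs of `F` have `π (head b) = π (tail b)`, and on every
other arc `d` has the sign of `π (head b) - π (tail b)` (strict monotonicity of `C'`; `d = 0` off
`F`). Given an arc `a` with `d a > 0`, cut along the nodes `i` with `π i > π (tail a)` together with
the nodes reachable from `head a` through linear arcs of `F` other than `a`. Acyclicity keeps
`tail a` outside the cut, so `a` enters it and every other arc crosses it in the direction given by
the sign of `d`; summing `ρ_d` over the cut gives `d a ≤ ∑ i, |ρ_d i|`.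
-/

open Function

section Cycle

variable {V E : Type*} (tail head : E → V)

/-- `s i` records whether `c i` is traversed forwards, from `tail` to `head`. -/
def HasUndirectedCycle (P : E → Prop) : Prop :=
  ∃ k : ℕ, ∃ (c : Fin (k + 1) → E) (s : Fin (k + 1) → Bool),
    (∀ i, P (c i)) ∧ Injective c ∧
    Injective (fun i => if s i then tail (c i) else head (c i)) ∧
    ∀ i : Fin (k + 1), (if s i then head (c i) else tail (c i)) =
      (if s (i + 1) then tail (c (i + 1)) else head (c (i + 1)))

def arcGraph (P : E → Prop) : SimpleGraph V :=
  SimpleGraph.fromRel fun u w => ∃ b, P b ∧ tail b = u ∧ head b = w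

variable {tail head}

lemma exists_orientedArc_of_arcGraph_adj {P : E → Prop} {u w : V}
    (h : (arcGraph tail head P).Adj u w) :
    ∃ b, ∃ σ : Bool, P b ∧
      (if σ then tail b else head b) = u ∧ (if σ then head b else tail b) = w := by
  obtain ⟨-, ⟨b, hb, rfl, rfl⟩ | ⟨b, hb, rfl, rfl⟩⟩ := (SimpleGraph.fromRel_adj _ _ _).mp h
  · exact ⟨b, true, hb, rfl, rfl⟩
  · exact ⟨b, false, hb, rfl, rfl⟩

lemma arcGraph_reachable {P : E → Prop} {b : E} (hb : P b) :
    (arcGraph tail head P).Reachable (tail b) (head b) := by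
  by_cases h : tail b = head b
  · rw [h]
  · exact ((SimpleGraph.fromRel_adj _ _ _).mpr ⟨h, .inl ⟨b, hb, rfl, rfl⟩⟩).reachable

lemma eq_of_arcGraph_reachable {P : E → Prop} {π : V → ℝ}
    (hπ : ∀ b, P b → π (head b) = π (tail b)) {u w : V}
    (h : (arcGraph tail head P).Reachable u w) : π u = π w := by
  obtain ⟨p⟩ := h
  induction p with
  | nil => rfl
  | cons hadj _ ih =>
    obtain ⟨b, σ, hb, rfl, rfl⟩ := exists_orientedArc_of_arcGraph_adj hadj
    cases σ <;> simp only [Bool.false_eq_true, if_true, if_false] at ih ⊢ <;> rw [← ih, hπ b hb]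

lemma injective_of_getVert_edges {G : SimpleGraph V} {u w : V} {p : G.Walk u w} (hp : p.IsPath)
    {B : Fin p.length → E}
    (hB : ∀ j, s(tail (B j), head (B j)) = s(p.getVert j, p.getVert (j + 1))) : Injective B := by
  have hinj : ∀ {k l : ℕ}, k ≤ p.length → l ≤ p.length → p.getVert k = p.getVert l → k = l :=
    fun hk hl h => hp.getVert_injOn hk hl h
  intro i j hij
  have h := hB i
  rw [hij, hB j, Sym2.eq_iff] at h
  rcases h with ⟨h1, -⟩ | ⟨h1, h2⟩
  · exact Fin.ext (hinj j.is_lt.le i.is_lt.le h1).symm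
  · have := hinj j.is_lt.le (by omega) h1
    have := hinj (by omega) i.is_lt.le h2
    omega

lemma hasUndirectedCycle_of_reachable [DecidableEq V] {P : E → Prop} {a : E} (ha : P a)
    (h : (arcGraph tail head fun b => P b ∧ b ≠ a).Reachable (head a) (tail a)) :
    HasUndirectedCycle tail head P := by
  obtain ⟨w⟩ := h
  set p := w.toPath.1
  have hp : p.IsPath := w.toPath.2
  set n := p.length
  choose B σ hB hstart hend using fun j : Fin n =>
    exists_orientedArc_of_arcGraph_adj (p.adj_getVert_succ j.isLt)
  have hBedge : ∀ j, s(tail (B j), head (B j)) = s(p.getVert j, p.getVert (j + 1)) := by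
    intro j
    rw [← hstart j, ← hend j]
    cases σ j <;> simp [Sym2.eq_swap]
  let v : Fin (n + 1) → V := fun i => p.getVert i
  have hv : Injective v := fun i j h => Fin.ext (hp.getVert_injOn i.is_le j.is_le h)
  set c : Fin (n + 1) → E := Fin.cons a B
  set s : Fin (n + 1) → Bool := Fin.cons true σ
  have hstart' : ∀ i, (if s (i + 1) then tail (c (i + 1)) else head (c (i + 1))) = v i := by
    intro i
    induction i using Fin.lastCases with
    | last => simp [s, c, v, n]
    | cast j => simpa [← Fin.succ_castSucc, s, c, v] using hstart j
  have hend' : ∀ i, (if s i then head (c i) else tail (c i)) = v i := by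
    intro i
    induction i using Fin.cases with
    | zero => simp [s, c, v]
    | succ j => simpa [s, c, v] using hend j
  refine ⟨n, c, s, ?_, ?_, ?_, fun i => (hend' i).trans (hstart' i).symm⟩
  · intro i
    induction i using Fin.cases with
    | zero => exact ha
    | succ j => exact (hB j).1
  · exact Fin.cons_injective_iff.mpr
      ⟨fun ⟨j, hj⟩ => (hB j).2 hj, injective_of_getVert_edges hp hBedge⟩
  · intro i j hij
    have h : v (i - 1) = v (j - 1) := by
      rw [← hstart', ← hstart', sub_add_cancel, sub_add_cancel]
      exact hij
    simpa using hv h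

end Cycle

section Cut

variable {V E : Type*} {tail head : E → V} [Fintype E] [DecidableEq V]

lemma netInflow_sub (x y : E → ℝ) (i : V) :
    netInflow tail head x i - netInflow tail head y i = netInflow tail head (x - y) i := by
  simp only [netInflow, Pi.sub_apply, sum_sub_distrib]
  ring

lemma netInflow_neg (d : E → ℝ) (i : V) :
    netInflow tail head (-d) i = -netInflow tail head d i := by
  simp only [netInflow, Pi.neg_apply, sum_neg_distrib]
  ring

lemma sum_netInflow_eq (S : Finset V) (d : E → ℝ) :
    ∑ i ∈ S, netInflow tail head d i =
      ∑ b, ((if head b ∈ S then d b else 0) - (if tail b ∈ S then d b else 0)) := by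
  simp only [netInflow, sum_filter, sum_sub_distrib]
  rw [sum_comm, sum_comm (s := S)]
  simp [sum_ite_eq]

lemma le_sum_netInflow_of_cut (S : Finset V) (d : E → ℝ) {a : E}
    (ha : head a ∈ S ∧ tail a ∉ S)
    (hin : ∀ b ≠ a, head b ∈ S → tail b ∉ S → 0 ≤ d b)
    (hout : ∀ b, tail b ∈ S → head b ∉ S → d b ≤ 0) :
    d a ≤ ∑ i ∈ S, netInflow tail head d i := by
  classical
  rw [sum_netInflow_eq, ← add_sum_erase _ _ (mem_univ a), if_pos ha.1, if_neg ha.2, sub_zero,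
    le_add_iff_nonneg_right]
  refine sum_nonneg fun b hb => ?_
  have hba := ne_of_mem_erase hb
  by_cases hh : head b ∈ S <;> by_cases ht : tail b ∈ S <;> simp only [hh, ht, if_true, if_false]
  · simp
  · simpa using hin b hba hh ht
  · simpa using hout b ht hh
  · simp

end Cut

section Potential

variable {V E : Type*} {tail head : E → V} [Fintype V] [Fintype E] [DecidableEq V]
  {L : E → Prop} {π : V → ℝ} {d : E → ℝ}

lemma le_sum_abs_netInflow (hacyc : ¬ HasUndirectedCycle tail head L)
    (hL : ∀ b, L b → π (head b) = π (tail b))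
    (hfwd : ∀ b, ¬ L b → π (tail b) ≤ π (head b) → 0 ≤ d b)
    (hbwd : ∀ b, ¬ L b → π (head b) ≤ π (tail b) → d b ≤ 0) (a : E) :
    d a ≤ ∑ i, |netInflow tail head d i| := by
  classical
  rcases le_or_gt (d a) 0 with hda | hda
  · exact hda.trans (sum_nonneg fun i _ => abs_nonneg _)
  set θ := π (tail a)
  set G := arcGraph tail head fun b => L b ∧ b ≠ a
  have hreach : ∀ {u w}, G.Reachable u w → π u = π w :=
    eq_of_arcGraph_reachable fun b hb => hL b hb.1
  have hθ : θ ≤ π (head a) := by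
    by_cases ha : L a
    · exact (hL a ha).ge
    · exact le_of_not_ge fun h => hda.not_ge (hbwd a ha h)
  set S := univ.filter fun i => θ < π i ∨ G.Reachable (head a) i
  have hge : ∀ {i}, i ∈ S → θ ≤ π i := by
    intro i hi
    rcases (mem_filter.mp hi).2 with h | h
    exacts [h.le, hθ.trans (hreach h).le]
  have hle : ∀ {i}, i ∉ S → π i ≤ θ :=
    fun hi => le_of_not_gt fun h => hi (mem_filter.mpr ⟨mem_univ _, .inl h⟩)
  have hhead : head a ∈ S := mem_filter.mpr ⟨mem_univ _, .inr .rfl⟩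
  have htail : tail a ∉ S := by
    rintro hS
    obtain h | h := (mem_filter.mp hS).2
    · exact lt_irrefl θ h
    by_cases ha : L a
    · exact hacyc (hasUndirectedCycle_of_reachable ha h)
    · exact hda.not_ge (hbwd a ha (hreach h).le)
  have hlin : ∀ b ≠ a, L b → (head b ∈ S ↔ tail b ∈ S) := by
    intro b hba hb
    have hr : G.Reachable (tail b) (head b) := arcGraph_reachable ⟨hb, hba⟩
    simp only [S, mem_filter, mem_univ, true_and, hL b hb]
    exact or_congr_right ⟨fun h => h.trans hr.symm, fun h => h.trans hr⟩
  calc d a ≤ ∑ i ∈ S, netInflow tail head d i := by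
        refine le_sum_netInflow_of_cut S d ⟨hhead, htail⟩ (fun b hba hh ht => ?_) fun b ht hh => ?_
        · exact hfwd b (fun hb => ht ((hlin b hba hb).mp hh)) ((hle ht).trans (hge hh))
        · have hba : b ≠ a := by rintro rfl; exact hh hhead
          exact hbwd b (fun hb => hh ((hlin b hba hb).mpr ht)) ((hle hh).trans (hge ht))
    _ ≤ ∑ i ∈ S, |netInflow tail head d i| := sum_le_sum fun i _ => le_abs_self _
    _ ≤ ∑ i, |netInflow tail head d i| :=
        sum_le_sum_of_subset_of_nonneg (subset_univ S) fun i _ _ => abs_nonneg _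

lemma abs_le_sum_abs_netInflow (hacyc : ¬ HasUndirectedCycle tail head L)
    (hL : ∀ b, L b → π (head b) = π (tail b))
    (hfwd : ∀ b, ¬ L b → π (tail b) ≤ π (head b) → 0 ≤ d b)
    (hbwd : ∀ b, ¬ L b → π (head b) ≤ π (tail b) → d b ≤ 0) (a : E) :
    |d a| ≤ ∑ i, |netInflow tail head d i| := by
  refine abs_le'.mpr ⟨le_sum_abs_netInflow hacyc hL hfwd hbwd a, ?_⟩
  have h := le_sum_abs_netInflow (π := -π) (d := -d) hacyc
    (fun b hb => neg_inj.mpr (hL b hb))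
    (fun b hb h => neg_nonneg.mpr (hbwd b hb (neg_le_neg_iff.mp h)))
    (fun b hb h => neg_nonpos.mpr (hfwd b hb (neg_le_neg_iff.mp h))) a
  simpa only [netInflow_neg, abs_neg, Pi.neg_apply] using h

end Potential

theorem stmt_6_general {V E : Type*} [Fintype V] [Fintype E] [DecidableEq V]
    (tail head : E → V) (C' : E → ℝ → ℝ)
    (hdich : ∀ a, (∃ γ, ∀ t, C' a t = γ) ∨ StrictMono (C' a))
    (F : Finset E)
    (hacyc : ¬ ∃ k : ℕ, ∃ (c : Fin (k + 1) → E) (s : Fin (k + 1) → Bool),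
      (∀ i, c i ∈ F ∧ ∃ γ, ∀ t, C' (c i) t = γ) ∧
      Function.Injective c ∧
      Function.Injective (fun i => if s i then tail (c i) else head (c i)) ∧
      ∀ i : Fin (k + 1), (if s i then head (c i) else tail (c i)) =
        (if s (i + 1) then tail (c (i + 1)) else head (c (i + 1))))
    (x y : E → ℝ)
    (hx0 : ∀ a, a ∉ F → x a = 0) (hy0 : ∀ a, a ∉ F → y a = 0)
    (πx : V → ℝ) (hπx : ∀ a ∈ F, πx (head a) - πx (tail a) = C' a (x a))
    (πy : V → ℝ) (hπy : ∀ a ∈ F, πy (head a) - πy (tail a) = C' a (y a)) :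
    ∀ a : E, |x a - y a| ≤ ∑ i : V, |netInflow tail head x i - netInflow tail head y i| := by
  intro a
  have hΔ : ∀ b ∈ F, (πx - πy) (head b) - (πx - πy) (tail b) = C' b (x b) - C' b (y b) :=
    fun b hb => by simp only [Pi.sub_apply]; linarith [hπx b hb, hπy b hb]
  simp_rw [netInflow_sub]
  refine abs_le_sum_abs_netInflow (L := fun b => b ∈ F ∧ ∃ γ, ∀ t, C' b t = γ) (π := πx - πy)
    (d := x - y) hacyc ?_ ?_ ?_ a
  · rintro b ⟨hb, γ, hγ⟩
    linarith [hΔ b hb, hγ (x b), hγ (y b)]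
  · intro b hb h
    by_cases hbF : b ∈ F
    · have hsm := (hdich b).resolve_left (hb ⟨hbF, ·⟩)
      exact sub_nonneg.mpr (hsm.le_iff_le.mp (by linarith [hΔ b hbF]))
    · simp [hx0 b hbF, hy0 b hbF]
  · intro b hb h
    by_cases hbF : b ∈ F
    · have hsm := (hdich b).resolve_left (hb ⟨hbF, ·⟩)
      exact sub_nonpos.mpr (hsm.le_iff_le.mp (by linarith [hΔ b hbF]))
    · simp [hx0 b hbF, hy0 b hbF]

/-- if `F` is linear acyclic (its linear arcs contain no undirected cycle:
no cyclic sequence of pairwise distinct linear arcs of `F`, with an orientation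
`s : Fin (k+1) → Bool` and pairwise distinct start vertices, consecutive endpoints
matching) and `x, y` are both `F`-tight, then `max_a |x_a − y_a| ≤ Σ_i |ρ_x(i) − ρ_y(i)|`,
here stated as `|x_a − y_a| ≤ Σ_i |ρ_x(i) − ρ_y(i)|` for every arc `a`. -/
theorem stmt_6 {V E : Type*} [Fintype V] [Fintype E] [DecidableEq V]
    (tail head : E → V) (C C' : E → ℝ → ℝ)
    (hconv : ∀ a, ConvexOn ℝ Set.univ (C a))
    (hderiv : ∀ a t, HasDerivAt (C a) (C' a t) t)
    (hdich : ∀ a, (∃ γ, ∀ t, C' a t = γ) ∨ StrictMono (C' a))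
    (F : Finset E)
    (hacyc : ¬ ∃ k : ℕ, ∃ (c : Fin (k + 1) → E) (s : Fin (k + 1) → Bool),
      (∀ i, c i ∈ F ∧ ∃ γ, ∀ t, C' (c i) t = γ) ∧
      Function.Injective c ∧
      Function.Injective (fun i => if s i then tail (c i) else head (c i)) ∧
      ∀ i : Fin (k + 1), (if s i then head (c i) else tail (c i)) =
        (if s (i + 1) then tail (c (i + 1)) else head (c (i + 1))))
    (x y : E → ℝ)
    (hx0 : ∀ a, a ∉ F → x a = 0) (hy0 : ∀ a, a ∉ F → y a = 0)
    (πx : V → ℝ) (hπx : ∀ a ∈ F, πx (head a) - πx (tail a) = C' a (x a))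
    (πy : V → ℝ) (hπy : ∀ a ∈ F, πy (head a) - πy (tail a) = C' a (y a)) :
    ∀ a : E, |x a - y a| ≤ ∑ i : V, |netInflow tail head x i - netInflow tail head y i| :=
  stmt_6_general tail head C' hdich F hacyc x y hx0 hy0 πx hπx πy hπy
end

section
/- Let F ⊆ E be linear acyclic and let x, y : E → ℝ both be F-tight. Then the difference multigraph D_{x,y} contains no directed cycle. -/
open Finset

/-! The difference `πx - πy` of the two potentials increases along every arc `a` of `D_{x,y}`
by `|C'_a(x_a) - C'_a(y_a)| ≥ 0`, since each `C'_a` is monotone. Around a directed cycle these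
increases sum to zero, so each vanishes; a strictly monotone `C'_a` would then force
`x_a = y_a`. Hence every arc of the cycle is a linear arc of `F`, and the cycle is an undirected
cycle of linear arcs of `F`. -/

theorem sum_cyclic_sub_eq_zero {M : Type*} [AddCommGroup M] {n : ℕ} [NeZero n] (f : Fin n → M) :
    ∑ i, (f (i + 1) - f i) = 0 := by
  rw [sum_sub_distrib, sub_eq_zero]
  exact Equiv.sum_comp (Equiv.addRight 1) f

theorem cyclic_sub_eq_zero_of_nonneg {M : Type*} [AddCommGroup M] [PartialOrder M]
    [IsOrderedAddMonoid M] {n : ℕ} [NeZero n] {f : Fin n → M} (h : ∀ i, 0 ≤ f (i + 1) - f i)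
    (i : Fin n) : f (i + 1) - f i = 0 :=
  (sum_eq_zero_iff_of_nonneg fun j _ => h j).1 (sum_cyclic_sub_eq_zero f) i (mem_univ i)

theorem Monotone.ite_lt_sub_eq_abs {α β : Type*} [LinearOrder α] [AddCommGroup β] [LinearOrder β]
    [IsOrderedAddMonoid β] {f : α → β} (hf : Monotone f) (a b : α) :
    (if b < a then f a - f b else f b - f a) = |f a - f b| := by
  split_ifs with h
  · exact (abs_of_nonneg (sub_nonneg.2 (hf h.le))).symm
  · rw [abs_sub_comm]
    exact (abs_of_nonneg (sub_nonneg.2 (hf (not_lt.1 h)))).symm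

section DifferenceGraph

variable {V E : Type*} (tail head : E → V) (x y : E → ℝ)

noncomputable def diffTail (e : E) : V := if y e < x e then tail e else head e

noncomputable def diffHead (e : E) : V := if y e < x e then head e else tail e

variable {tail head x y}

theorem sub_diffHead_sub_diffTail {C' : ℝ → ℝ} (hC' : Monotone C') {πx πy : V → ℝ} {e : E}
    (hx : πx (head e) - πx (tail e) = C' (x e)) (hy : πy (head e) - πy (tail e) = C' (y e)) :
    (πx - πy) (diffHead tail head x y e) - (πx - πy) (diffTail tail head x y e) =
      |C' (x e) - C' (y e)| := by
  rw [← hC'.ite_lt_sub_eq_abs, diffHead, diffTail]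
  split_ifs <;> simp only [Pi.sub_apply] <;> linarith

end DifferenceGraph

theorem stmt_8_general {V E : Type*}
    (tail head : E → V) (C' : E → ℝ → ℝ)
    (hdich : ∀ a, (∃ γ, ∀ t, C' a t = γ) ∨ StrictMono (C' a))
    (F : Finset E)
    (hacyc : ¬ ∃ k : ℕ, ∃ (c : Fin (k + 1) → E) (s : Fin (k + 1) → Bool),
      (∀ i, c i ∈ F ∧ ∃ γ, ∀ t, C' (c i) t = γ) ∧
      Function.Injective c ∧
      Function.Injective (fun i => if s i then tail (c i) else head (c i)) ∧
      ∀ i : Fin (k + 1), (if s i then head (c i) else tail (c i)) =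
        (if s (i + 1) then tail (c (i + 1)) else head (c (i + 1))))
    (x y : E → ℝ)
    (hx0 : ∀ a, a ∉ F → x a = 0) (hy0 : ∀ a, a ∉ F → y a = 0)
    (πx : V → ℝ) (hπx : ∀ a ∈ F, πx (head a) - πx (tail a) = C' a (x a))
    (πy : V → ℝ) (hπy : ∀ a ∈ F, πy (head a) - πy (tail a) = C' a (y a)) :
    ¬ ∃ k : ℕ, ∃ c : Fin (k + 1) → {e : E // x e ≠ y e},
      Function.Injective
        (fun i => if y (c i).1 < x (c i).1 then tail (c i).1 else head (c i).1) ∧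
      ∀ i : Fin (k + 1),
        (if y (c i).1 < x (c i).1 then head (c i).1 else tail (c i).1) =
          (if y (c (i + 1)).1 < x (c (i + 1)).1 then tail (c (i + 1)).1
            else head (c (i + 1)).1) := by
  rintro ⟨k, c, hstart, hcycle⟩
  apply hacyc
  have hmem (i) : (c i).1 ∈ F := by_contra fun h => (c i).2 (by rw [hx0 _ h, hy0 _ h])
  have hmono (a) : Monotone (C' a) :=
    (hdich a).elim (fun ⟨γ, hγ⟩ s t _ => by rw [hγ, hγ]) StrictMono.monotone
  have hincr (i) : (πx - πy) (diffTail tail head x y (c (i + 1)).1) -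
      (πx - πy) (diffTail tail head x y (c i).1) =
        |C' (c i).1 (x (c i).1) - C' (c i).1 (y (c i).1)| := by
    rw [← sub_diffHead_sub_diffTail (hmono _) (hπx _ (hmem i)) (hπy _ (hmem i))]
    exact congrArg (· - _) (congrArg _ (hcycle i).symm)
  have hlin (i) : ∃ γ, ∀ t, C' (c i).1 t = γ := by
    have hzero := cyclic_sub_eq_zero_of_nonneg
      (f := fun j => (πx - πy) (diffTail tail head x y (c j).1))
      (fun j => (hincr j).symm ▸ abs_nonneg _) i
    rw [hincr, abs_eq_zero, sub_eq_zero] at hzero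
    exact (hdich _).resolve_right fun hsm => (c i).2 (hsm.injective hzero)
  refine ⟨k, fun i => (c i).1, fun i => decide (y (c i).1 < x (c i).1),
    fun i => ⟨hmem i, hlin i⟩,
    Function.Injective.of_comp (f := diffTail tail head x y) hstart, ?_, ?_⟩
  · simpa using hstart
  · simpa using hcycle

/-- if `F` is linear acyclic (its linear arcs contain no undirected cycle)
and `x, y` are both `F`-tight, then the difference multigraph `D_{x,y}` (arcs `e` with
`x_e ≠ y_e`, oriented from `tail e` to `head e` if `x_e > y_e` and reversed otherwise)
contains no directed cycle (no cyclic sequence of its arcs with pairwise distinct start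
vertices, consecutive endpoints matching). -/
theorem stmt_8 {V E : Type*} [Fintype V] [Fintype E]
    (tail head : E → V) (C C' : E → ℝ → ℝ)
    (hconv : ∀ a, ConvexOn ℝ Set.univ (C a))
    (hderiv : ∀ a t, HasDerivAt (C a) (C' a t) t)
    (hdich : ∀ a, (∃ γ, ∀ t, C' a t = γ) ∨ StrictMono (C' a))
    (F : Finset E)
    (hacyc : ¬ ∃ k : ℕ, ∃ (c : Fin (k + 1) → E) (s : Fin (k + 1) → Bool),
      (∀ i, c i ∈ F ∧ ∃ γ, ∀ t, C' (c i) t = γ) ∧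
      Function.Injective c ∧
      Function.Injective (fun i => if s i then tail (c i) else head (c i)) ∧
      ∀ i : Fin (k + 1), (if s i then head (c i) else tail (c i)) =
        (if s (i + 1) then tail (c (i + 1)) else head (c (i + 1))))
    (x y : E → ℝ)
    (hx0 : ∀ a, a ∉ F → x a = 0) (hy0 : ∀ a, a ∉ F → y a = 0)
    (πx : V → ℝ) (hπx : ∀ a ∈ F, πx (head a) - πx (tail a) = C' a (x a))
    (πy : V → ℝ) (hπy : ∀ a ∈ F, πy (head a) - πy (tail a) = C' a (y a)) :
    ¬ ∃ k : ℕ, ∃ c : Fin (k + 1) → {e : E // x e ≠ y e},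
      Function.Injective
        (fun i => if y (c i).1 < x (c i).1 then tail (c i).1 else head (c i).1) ∧
      ∀ i : Fin (k + 1),
        (if y (c i).1 < x (c i).1 then head (c i).1 else tail (c i).1) =
          (if y (c (i + 1)).1 < x (c (i + 1)).1 then tail (c (i + 1)).1
            else head (c (i + 1)).1) :=
  stmt_8_general tail head C' hdich F hacyc x y hx0 hy0 πx hπx πy hπy
end
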